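/- For any irreducible polynomial P ∈ F_q[t] with deg P ≥ 2 and any integer e ≥ 3, one has δ(S(P^e)) < δ(P^e)/q^{deg P}. -/

import Mathlib

open Polynomial

variable {F : Type*} [Field F] [Fintype F] [DecidableEq F]

/-- `delta a f` is the natural number attached to the polynomial `f` via the
enumeration `a : Fin q ≃ F` of the field (`q = Fintype.card F`): if
`f = a_{i_0} + a_{i_1} t + ⋯ + a_{i_n} t^n` then `delta a f = i_0 + i_1 q + ⋯ + i_n q^n`.
In particular `delta a 0 = 0` whenever `a 0 = 0`. -/
noncomputable def delta (a : Fin (Fintype.card F) ≃ F) (f : F[X]) : ℕ :=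
  ∑ j ∈ Finset.range (f.natDegree + 1), (a.symm (f.coeff j) : ℕ) * Fintype.card F ^ j

/-- The inverse of `delta`: the polynomial whose `j`-th coefficient is the `j`-th
base-`q` digit of `m` (under the enumeration `a`). -/
noncomputable def deltaInv (a : Fin (Fintype.card F) ≃ F) (m : ℕ) : F[X] :=
  ∑ j ∈ Finset.range (m + 1),
    C (a ⟨m / Fintype.card F ^ j % Fintype.card F, Nat.mod_lt _ Fintype.card_pos⟩) * X ^ j

/-- The factorial of a polynomial: `f! = ∏_{g < f} (f - g)`, the product over all
polynomials `g` with `delta a g < delta a f`; in particular `0! = 1`. -/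
noncomputable def pfact (a : Fin (Fintype.card F) ≃ F) (f : F[X]) : F[X] :=
  ∏ m ∈ Finset.range (delta a f), (f - deltaInv a m)

/-- The Smarandache function: `S a 0 = 0`, and for `f ≠ 0`, `S a f` is the smallest
polynomial `g` (in the order given by `delta`) such that `f ∣ g!`. -/
noncomputable def S (a : Fin (Fintype.card F) ≃ F) (f : F[X]) : F[X] :=
  if f = 0 then 0 else deltaInv a (sInf {m : ℕ | f ∣ pfact a (deltaInv a m)})

/-! ### Auxiliary numeric lemmas on base-`q` digits -/

lemma sum_digits_lt {q : ℕ} (hq : 1 ≤ q) (c : ℕ → ℕ) (hc : ∀ j, c j < q) (k : ℕ) :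
    ∑ j ∈ Finset.range k, c j * q ^ j < q ^ k := by
  induction k with
  | zero => simp
  | succ k ih =>
    rw [Finset.sum_range_succ, pow_succ]
    have h1 := hc k
    have h2 : 0 < q ^ k := Nat.pow_pos hq
    nlinarith

lemma digit_sum {q : ℕ} (m N : ℕ) :
    ∑ j ∈ Finset.range N, (m / q ^ j % q) * q ^ j = m % q ^ N := by
  induction N with
  | zero => simp [Nat.mod_one]
  | succ N ih =>
    rw [Finset.sum_range_succ, ih, pow_succ, Nat.mod_mul]
    ring

lemma digit_extract {q : ℕ} (hq : 2 ≤ q) (c : ℕ → ℕ) (hc : ∀ j, c j < q) (N : ℕ)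
    (hN : ∀ j, N ≤ j → c j = 0) (t : ℕ) :
    (∑ j ∈ Finset.range N, c j * q ^ j) / q ^ t % q = c t := by
  have hq1 : 1 ≤ q := by omega
  by_cases ht : t < N
  · have hsplit : ∑ j ∈ Finset.range N, c j * q ^ j
        = (∑ j ∈ Finset.range t, c j * q ^ j)
          + (∑ k ∈ Finset.range (N - t), c (t + k) * q ^ (t + k)) := by
      rw [Finset.range_eq_Ico, ← Finset.sum_Ico_consecutive _ (Nat.zero_le t) ht.le]
      congr 1
      rw [← Finset.range_eq_Ico]
      exact Finset.sum_Ico_eq_sum_range (fun j => c j * q ^ j) t N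
    have hfac : (∑ k ∈ Finset.range (N - t), c (t + k) * q ^ (t + k))
        = (∑ k ∈ Finset.range (N - t), c (t + k) * q ^ k) * q ^ t := by
      rw [Finset.sum_mul]
      apply Finset.sum_congr rfl
      intro k _
      rw [pow_add]
      ring
    rw [hsplit, hfac, Nat.add_mul_div_right _ _ (show 0 < q ^ t from Nat.pow_pos hq1),
      Nat.div_eq_of_lt (sum_digits_lt hq1 c hc t), zero_add]
    obtain ⟨M, hM⟩ : ∃ M, N - t = M + 1 := ⟨N - t - 1, by omega⟩
    rw [hM, Finset.sum_range_succ']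
    have hfac2 : (∑ k ∈ Finset.range M, c (t + (k + 1)) * q ^ (k + 1))
        = q * ∑ k ∈ Finset.range M, c (t + (k + 1)) * q ^ k := by
      rw [Finset.mul_sum]
      apply Finset.sum_congr rfl
      intro k _
      ring
    rw [hfac2]
    simp [Nat.mul_add_mod, Nat.mod_eq_of_lt (hc t)]
  · have hlt : (∑ j ∈ Finset.range N, c j * q ^ j) < q ^ t :=
      lt_of_lt_of_le (sum_digits_lt hq1 c hc N) (Nat.pow_le_pow_right hq1 (by omega))
    rw [Nat.div_eq_of_lt hlt, Nat.zero_mod, hN t (by omega)]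

/-! ### Auxiliary lemmas on `delta` and `deltaInv` -/

section aux

variable (a : Fin (Fintype.card F) ≃ F)

lemma card_F_two : 2 ≤ Fintype.card F := Fintype.one_lt_card

lemma asymm_zero (h0 : a 0 = 0) : (a.symm (0 : F) : ℕ) = 0 := by
  rw [← h0, Equiv.symm_apply_apply]
  simp

lemma deltaInv_coeff (m j : ℕ) :
    (deltaInv a m).coeff j = if j ≤ m then
      a ⟨m / Fintype.card F ^ j % Fintype.card F, Nat.mod_lt _ Fintype.card_pos⟩ else 0 := by
  unfold deltaInv
  rw [finset_sum_coeff]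
  simp only [coeff_C_mul, coeff_X_pow, mul_ite, mul_one, mul_zero]
  rw [Finset.sum_ite_eq (Finset.range (m + 1)) j]
  simp [Nat.lt_succ_iff]

lemma natDegree_deltaInv_le (m : ℕ) : (deltaInv a m).natDegree ≤ m := by
  rw [natDegree_le_iff_coeff_eq_zero]
  intro N hN
  rw [deltaInv_coeff, if_neg (by omega)]

lemma delta_eq_sum_of_le (h0 : a 0 = 0) (f : F[X]) (M : ℕ) (hM : f.natDegree ≤ M) :
    delta a f = ∑ j ∈ Finset.range (M + 1), (a.symm (f.coeff j) : ℕ) * Fintype.card F ^ j := by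
  unfold delta
  apply Finset.sum_subset (Finset.range_subset_range.2 (by omega))
  intro j _ hj
  rw [Finset.mem_range] at hj
  have hc : f.coeff j = 0 := coeff_eq_zero_of_natDegree_lt (by omega)
  rw [hc, asymm_zero a h0, zero_mul]

lemma delta_deltaInv (h0 : a 0 = 0) (m : ℕ) : delta a (deltaInv a m) = m := by
  have hq : 2 ≤ Fintype.card F := card_F_two
  rw [delta_eq_sum_of_le a h0 _ m (natDegree_deltaInv_le a m)]
  have hcongr : ∀ j ∈ Finset.range (m + 1),
      (a.symm ((deltaInv a m).coeff j) : ℕ) * Fintype.card F ^ j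
        = (m / Fintype.card F ^ j % Fintype.card F) * Fintype.card F ^ j := by
    intro j hj
    rw [Finset.mem_range] at hj
    rw [deltaInv_coeff, if_pos (by omega), Equiv.symm_apply_apply]
  rw [Finset.sum_congr rfl hcongr, digit_sum]
  exact Nat.mod_eq_of_lt (lt_of_lt_of_le (show m < Fintype.card F ^ m from Nat.lt_pow_self hq)
    (Nat.pow_le_pow_right (by omega) (by omega)))

lemma pow_natDegree_le_delta (h0 : a 0 = 0) (f : F[X]) (hf : f ≠ 0) :
    Fintype.card F ^ f.natDegree ≤ delta a f := by
  have h1 : 1 ≤ (a.symm (f.coeff f.natDegree) : ℕ) := by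
    rw [Nat.one_le_iff_ne_zero]
    intro h
    have hz : a.symm (f.coeff f.natDegree) = a.symm 0 := by
      apply Fin.ext
      rw [h, asymm_zero a h0]
    have : f.coeff f.natDegree = 0 := a.symm.injective hz
    exact (leadingCoeff_ne_zero.mpr hf) this
  calc Fintype.card F ^ f.natDegree
      ≤ (a.symm (f.coeff f.natDegree) : ℕ) * Fintype.card F ^ f.natDegree := by
        nlinarith [(show 0 < Fintype.card F ^ f.natDegree from Nat.pow_pos (show 0 < Fintype.card F from Fintype.card_pos))]
    _ ≤ delta a f := Finset.single_le_sum (f := fun j => (a.symm (f.coeff j) : ℕ) * Fintype.card F ^ j)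
        (fun i _ => Nat.zero_le _) (Finset.self_mem_range_succ f.natDegree)

lemma natDegree_le_delta (h0 : a 0 = 0) (f : F[X]) : f.natDegree ≤ delta a f := by
  by_cases hf : f = 0
  · simp [hf]
  · exact le_trans (le_of_lt (show f.natDegree < Fintype.card F ^ f.natDegree from Nat.lt_pow_self card_F_two))
      (pow_natDegree_le_delta a h0 f hf)

lemma deltaInv_delta (h0 : a 0 = 0) (f : F[X]) : deltaInv a (delta a f) = f := by
  have hq : 2 ≤ Fintype.card F := card_F_two
  have hclt : ∀ j, ((a.symm (f.coeff j) : Fin (Fintype.card F)) : ℕ) < Fintype.card F :=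
    fun j => (a.symm (f.coeff j)).isLt
  have hcz : ∀ j, f.natDegree + 1 ≤ j → ((a.symm (f.coeff j) : Fin (Fintype.card F)) : ℕ) = 0 := by
    intro j hj
    rw [coeff_eq_zero_of_natDegree_lt (by omega), asymm_zero a h0]
  have hdig : ∀ t, delta a f / Fintype.card F ^ t % Fintype.card F
      = ((a.symm (f.coeff t) : Fin (Fintype.card F)) : ℕ) := by
    intro t
    exact digit_extract hq _ hclt (f.natDegree + 1) hcz t
  ext j
  rw [deltaInv_coeff]
  by_cases hj : j ≤ delta a f
  · rw [if_pos hj]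
    have heq : (⟨delta a f / Fintype.card F ^ j % Fintype.card F,
        Nat.mod_lt _ Fintype.card_pos⟩ : Fin (Fintype.card F)) = a.symm (f.coeff j) := by
      apply Fin.ext
      exact hdig j
    rw [heq, Equiv.apply_symm_apply]
  · rw [if_neg hj]
    have : f.natDegree < j := lt_of_le_of_lt (natDegree_le_delta a h0 f) (by omega)
    exact (coeff_eq_zero_of_natDegree_lt this).symm

lemma delta_injective (h0 : a 0 = 0) : Function.Injective (delta a) :=
  Function.LeftInverse.injective (deltaInv_delta a h0)

lemma delta_lt_pow (f : F[X]) (k : ℕ) (hk : f.natDegree < k) :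
    delta a f < Fintype.card F ^ k := by
  unfold delta
  calc ∑ j ∈ Finset.range (f.natDegree + 1), (a.symm (f.coeff j) : ℕ) * Fintype.card F ^ j
      ≤ ∑ j ∈ Finset.range k, (a.symm (f.coeff j) : ℕ) * Fintype.card F ^ j :=
        Finset.sum_le_sum_of_subset (Finset.range_subset_range.2 (by omega))
    _ < Fintype.card F ^ k := sum_digits_lt (by have := card_F_two (F := F); omega)
        _ (fun j => (a.symm (f.coeff j)).isLt) k

lemma delta_X_pow (h0 : a 0 = 0) (h1 : a 1 = 1) (k : ℕ) :
    delta a ((X : F[X]) ^ k) = Fintype.card F ^ k := by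
  unfold delta
  rw [natDegree_X_pow]
  rw [Finset.sum_eq_single k]
  · rw [coeff_X_pow, if_pos rfl, ← h1, Equiv.symm_apply_apply]
    have hone : ((1 : Fin (Fintype.card F)) : ℕ) = 1 := by
      rw [Fin.val_one']
      exact Nat.mod_eq_of_lt card_F_two
    rw [hone, one_mul]
  · intro b _ hbk
    rw [coeff_X_pow, if_neg hbk, asymm_zero a h0, zero_mul]
  · intro h
    exact absurd (Finset.self_mem_range_succ k) h

end aux

/-- Corollary 3.6: for any irreducible `P` with `deg P ≥ 2` and any `e ≥ 3`,
`δ(S(P^e)) < δ(P^e)/q^{deg P}`. -/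
theorem delta_smarandache_lt (a : Fin (Fintype.card F) ≃ F) (h0 : a 0 = 0) (h1 : a 1 = 1)
    (P : F[X]) (hP : Irreducible P) (hd : 2 ≤ P.natDegree) (e : ℕ) (he : 3 ≤ e) :
    Fintype.card F ^ P.natDegree * delta a (S a (P ^ e)) < delta a (P ^ e) := by
  classical
  obtain ⟨e', rfl⟩ : ∃ e', e = e' + 3 := ⟨e - 3, by omega⟩
  set e := e' + 3 with hedef
  have hq : 2 ≤ Fintype.card F := card_F_two
  set d := P.natDegree with hddef
  set k := d * (e - 1) with hkdef
  have he1 : e - 1 = e' + 2 := rfl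
  have hd0 : 0 < d := by omega
  have hdk : d ≤ k := by rw [hkdef, he1]; nlinarith
  have hk0 : 0 < k := by omega
  have hP0 : P ≠ 0 := hP.ne_zero
  have hlc : P.leadingCoeff ≠ 0 := leadingCoeff_ne_zero.mpr hP0
  have hne : P ^ e ≠ 0 := pow_ne_zero e hP0
  -- the monic associate of `P`
  set u : F[X] := P * C P.leadingCoeff⁻¹ with hu
  have hu_monic : u.Monic := monic_mul_leadingCoeff_inv hP0
  have hu0 : u ≠ 0 := hu_monic.ne_zero
  have hC0 : (C P.leadingCoeff⁻¹ : F[X]) ≠ 0 := by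
    rw [Ne, C_eq_zero]
    exact inv_ne_zero hlc
  have hund : u.natDegree = d := by
    rw [hu, natDegree_mul hP0 hC0, natDegree_C, add_zero]
  -- the two factors
  set f₁ : F[X] := u ^ (e - 1) with hf₁
  set f₂ : F[X] := u * X ^ (k - d) with hf₂
  have hf₁m : f₁.Monic := hu_monic.pow _
  have hf₂m : f₂.Monic := hu_monic.mul (monic_X_pow _)
  have hf₁d : f₁.natDegree = k := by
    rw [hf₁, natDegree_pow, hund, hkdef, mul_comm]
  have hf₂d : f₂.natDegree = k := by
    rw [hf₂, natDegree_mul hu0 (pow_ne_zero _ X_ne_zero), hund, natDegree_X_pow]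
    omega
  -- f₁ ≠ f₂
  have hf12 : f₁ ≠ f₂ := by
    intro hEq
    obtain ⟨e2, he2⟩ : ∃ e2, e - 1 = e2 + 1 := ⟨e - 2, by omega⟩
    rw [hf₁, hf₂, he2, pow_succ, mul_comm (u ^ e2) u] at hEq
    have hcan : u ^ e2 = X ^ (k - d) := mul_left_cancel₀ hu0 hEq
    have hPdvd : P ∣ X ^ (k - d) := by
      rw [← hcan, hu]
      exact dvd_trans (dvd_mul_right P _) (dvd_pow_self _ (by omega))
    have hPX : P ∣ X := hP.prime.dvd_of_dvd_pow hPdvd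
    have hle : P.natDegree ≤ (X : F[X]).natDegree := natDegree_le_of_dvd hPX X_ne_zero
    rw [natDegree_X] at hle
    omega
  -- degrees of X^k - fᵢ
  have hdeg : ∀ f : F[X], f.Monic → f.natDegree = k → ((X : F[X]) ^ k - f).natDegree < k := by
    intro f hm hnd
    by_cases hz : (X : F[X]) ^ k - f = 0
    · rw [hz]; simpa using hk0
    · rw [natDegree_lt_iff_degree_lt hz]
      have hdx : ((X : F[X]) ^ k).degree = (k : WithBot ℕ) := degree_X_pow k
      have := degree_sub_lt (p := (X : F[X]) ^ k) (q := f)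
        (by rw [hdx, degree_eq_natDegree hm.ne_zero, hnd]) (pow_ne_zero _ X_ne_zero) (by
        rw [(monic_X_pow k).leadingCoeff, hm.leadingCoeff])
      rwa [hdx] at this
  set g₁ : F[X] := X ^ k - f₁ with hg₁
  set g₂ : F[X] := X ^ k - f₂ with hg₂
  have hg₁d : g₁.natDegree < k := hdeg f₁ hf₁m hf₁d
  have hg₂d : g₂.natDegree < k := hdeg f₂ hf₂m hf₂d
  set m₁ := delta a g₁ with hm₁
  set m₂ := delta a g₂ with hm₂
  have hm₁lt : m₁ < Fintype.card F ^ k := delta_lt_pow a g₁ k hg₁d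
  have hm₂lt : m₂ < Fintype.card F ^ k := delta_lt_pow a g₂ k hg₂d
  have hm12 : m₁ ≠ m₂ := by
    intro h
    apply hf12
    have hgg : g₁ = g₂ := delta_injective a h0 h
    rw [hg₁, hg₂] at hgg
    linear_combination -hgg
  have hXk : delta a ((X : F[X]) ^ k) = Fintype.card F ^ k := delta_X_pow a h0 h1 k
  have hdIX : deltaInv a (Fintype.card F ^ k) = (X : F[X]) ^ k := by
    rw [← hXk, deltaInv_delta a h0]
  have hmem : Fintype.card F ^ k ∈ {m : ℕ | P ^ e ∣ pfact a (deltaInv a m)} := by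
    show P ^ e ∣ pfact a (deltaInv a (Fintype.card F ^ k))
    rw [hdIX]
    unfold pfact
    rw [hXk]
    have hsub : ({m₁, m₂} : Finset ℕ) ⊆ Finset.range (Fintype.card F ^ k) := by
      intro x hx
      rw [Finset.mem_insert, Finset.mem_singleton] at hx
      rw [Finset.mem_range]
      rcases hx with rfl | rfl
      · exact hm₁lt
      · exact hm₂lt
    have hprodpair : (∏ m ∈ ({m₁, m₂} : Finset ℕ), ((X : F[X]) ^ k - deltaInv a m))
        = f₁ * f₂ := by
      rw [Finset.prod_pair hm12, hm₁, hm₂, deltaInv_delta a h0, deltaInv_delta a h0, hg₁, hg₂,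
        sub_sub_cancel, sub_sub_cancel]
    have hPef : P ^ e ∣ f₁ * f₂ := by
      have heq : f₁ * f₂ = P ^ e * (C (P.leadingCoeff⁻¹ ^ e) * X ^ (k - d)) := by
        rw [hf₁, hf₂, hu]
        have h2 : (P * C P.leadingCoeff⁻¹) ^ (e - 1) * ((P * C P.leadingCoeff⁻¹) * X ^ (k - d))
            = (P * C P.leadingCoeff⁻¹) ^ (e - 1 + 1) * X ^ (k - d) := by ring
        rw [h2, (show e - 1 + 1 = e by omega), mul_pow, ← C_pow]
        ring
      rw [heq]
      exact Dvd.intro _ rfl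
    exact dvd_trans hPef (hprodpair ▸ Finset.prod_dvd_prod_of_subset _ _ _ hsub)
  have hSval : delta a (S a (P ^ e)) ≤ Fintype.card F ^ k := by
    rw [S, if_neg hne, delta_deltaInv a h0]
    exact Nat.sInf_le hmem
  have hstep : Fintype.card F ^ d * delta a (S a (P ^ e)) ≤ Fintype.card F ^ (d * e) := by
    calc Fintype.card F ^ d * delta a (S a (P ^ e))
        ≤ Fintype.card F ^ d * Fintype.card F ^ k := Nat.mul_le_mul_left _ hSval
      _ = Fintype.card F ^ (d + k) := (pow_add (Fintype.card F) d k).symm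
      _ = Fintype.card F ^ (d * e) := by
          congr 1
          show d + d * (e - 1) = d * e
          rw [he1]
          show d + d * (e' + 2) = d * (e' + 3)
          ring
  have hndPe : (P ^ e).natDegree = e * d := by rw [natDegree_pow]
  have hle : Fintype.card F ^ (d * e) ≤ delta a (P ^ e) := by
    have hh := pow_natDegree_le_delta a h0 (P ^ e) hne
    rwa [hndPe, mul_comm e d] at hh
  have hneq : Fintype.card F ^ (d * e) ≠ delta a (P ^ e) := by
    intro hEq
    have hPeX : P ^ e = (X : F[X]) ^ (d * e) := by
      apply delta_injective a h0
      rw [← hEq, delta_X_pow a h0 h1]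
    have hPX : P ∣ X := hP.prime.dvd_of_dvd_pow (n := d * e)
      (by rw [← hPeX]; exact dvd_pow_self P (by omega))
    have hle1 : P.natDegree ≤ (X : F[X]).natDegree := natDegree_le_of_dvd hPX X_ne_zero
    rw [natDegree_X] at hle1
    omega
  exact lt_of_le_of_lt hstep (lt_of_le_of_ne hle hneq)
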